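/- Let I be an operator ideal. Then: (i) every I-compact subset of a Banach space is norm compact (in particular norm bounded); (ii) for every Banach space E and every x ∈ E, the singleton {x} is I-compact, i.e., {x} ∈ K_I(E); (iii) if B ∈ K_I(E) and u ∈ L(E;F), then u(B) ∈ K_I(F). Consequently, the topology τ_{K_I} of uniform convergence on I-compact sets is an ideal topology: for every operator ideal J, the assignment (E,F) ↦ (τ_{K_I}-closure of J(E;F) in L(E;F)) is again an operator ideal. -/

import Mathlib

open Filter Topology Metric Set Pointwise

universe u

variable (𝕜 : Type u) [RCLike 𝕜]

/-- An assignment, to each pair of Banach spaces over `𝕜`, of a set of bounded linear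
operators between them. -/
abbrev BanachOpClass (𝕜 : Type u) [RCLike 𝕜] : Type (u + 1) :=
  ∀ (E F : Type u) [NormedAddCommGroup E] [NormedSpace 𝕜 E] [CompleteSpace E]
    [NormedAddCommGroup F] [NormedSpace 𝕜 F] [CompleteSpace F], Set (E →L[𝕜] F)

/-- A bounded linear operator has finite rank if its range is finite dimensional. -/
def IsFiniteRankOp {E F : Type u} [NormedAddCommGroup E] [NormedSpace 𝕜 E]
    [NormedAddCommGroup F] [NormedSpace 𝕜 F] (u : E →L[𝕜] F) : Prop :=
  FiniteDimensional 𝕜 (LinearMap.range (u : E →ₗ[𝕜] F))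

/-- Operator ideals in the sense of Pietsch. -/
structure IsOperatorIdeal (C : BanachOpClass 𝕜) : Prop where
  smul_mem : ∀ (E F : Type u) [NormedAddCommGroup E] [NormedSpace 𝕜 E] [CompleteSpace E]
    [NormedAddCommGroup F] [NormedSpace 𝕜 F] [CompleteSpace F]
    (a : 𝕜) (u : E →L[𝕜] F), u ∈ C E F → a • u ∈ C E F
  add_mem : ∀ (E F : Type u) [NormedAddCommGroup E] [NormedSpace 𝕜 E] [CompleteSpace E]
    [NormedAddCommGroup F] [NormedSpace 𝕜 F] [CompleteSpace F]
    (u v : E →L[𝕜] F), u ∈ C E F → v ∈ C E F → u + v ∈ C E F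
  finiteRank_mem : ∀ (E F : Type u) [NormedAddCommGroup E] [NormedSpace 𝕜 E] [CompleteSpace E]
    [NormedAddCommGroup F] [NormedSpace 𝕜 F] [CompleteSpace F]
    (u : E →L[𝕜] F), IsFiniteRankOp 𝕜 u → u ∈ C E F
  comp_mem : ∀ (E F G H : Type u)
    [NormedAddCommGroup E] [NormedSpace 𝕜 E] [CompleteSpace E]
    [NormedAddCommGroup F] [NormedSpace 𝕜 F] [CompleteSpace F]
    [NormedAddCommGroup G] [NormedSpace 𝕜 G] [CompleteSpace G]
    [NormedAddCommGroup H] [NormedSpace 𝕜 H] [CompleteSpace H]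
    (u : E →L[𝕜] F) (v : F →L[𝕜] G) (w : G →L[𝕜] H),
    v ∈ C F G → w.comp (v.comp u) ∈ C E H

/-- An assignment of a topology to each space of bounded operators between Banach spaces. -/
abbrev OpTopologyAssignment (𝕜 : Type u) [RCLike 𝕜] : Type (u + 1) :=
  ∀ (E F : Type u) [NormedAddCommGroup E] [NormedSpace 𝕜 E] [CompleteSpace E]
    [NormedAddCommGroup F] [NormedSpace 𝕜 F] [CompleteSpace F],
    TopologicalSpace (E →L[𝕜] F)

/-- The closure of an operator class with respect to an assignment of topologies. -/
def closureClass (τ : OpTopologyAssignment 𝕜) (C : BanachOpClass 𝕜) (E F : Type u)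
    [NormedAddCommGroup E] [NormedSpace 𝕜 E] [CompleteSpace E]
    [NormedAddCommGroup F] [NormedSpace 𝕜 F] [CompleteSpace F] : Set (E →L[𝕜] F) :=
  @closure _ (τ E F) (C E F)

/-- An ideal topology: a linear topology on each operator space such that the closure of
any operator ideal is again an operator ideal. -/
structure IsIdealTopology (τ : OpTopologyAssignment 𝕜) : Prop where
  topologicalAddGroup : ∀ (E F : Type u)
    [NormedAddCommGroup E] [NormedSpace 𝕜 E] [CompleteSpace E]
    [NormedAddCommGroup F] [NormedSpace 𝕜 F] [CompleteSpace F],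
    @IsTopologicalAddGroup (E →L[𝕜] F) (τ E F) _
  continuousSMul : ∀ (E F : Type u)
    [NormedAddCommGroup E] [NormedSpace 𝕜 E] [CompleteSpace E]
    [NormedAddCommGroup F] [NormedSpace 𝕜 F] [CompleteSpace F],
    @ContinuousSMul 𝕜 (E →L[𝕜] F) _ _ (τ E F)
  closure_isOperatorIdeal : ∀ C : BanachOpClass 𝕜,
    IsOperatorIdeal 𝕜 C → IsOperatorIdeal 𝕜 (closureClass 𝕜 τ C)

/-- A Banach space `E` has the `(I, J, τ)`-approximation property if `I(F;E)` is contained in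
the `τ`-closure of `J(F;E)` for every Banach space `F`. -/
def HasAP (I J : BanachOpClass 𝕜) (τ : OpTopologyAssignment 𝕜)
    (E : Type u) [NormedAddCommGroup E] [NormedSpace 𝕜 E] [CompleteSpace E] : Prop :=
  ∀ (F : Type u) [NormedAddCommGroup F] [NormedSpace 𝕜 F] [CompleteSpace F],
    I F E ⊆ @closure _ (τ F E) (J F E)

/-- A Banach space `E` has the `(I, J, τ)`-weak approximation property if `I(E;E)` is contained
in the `τ`-closure of `J(E;E)`. -/
def HasWAP (I J : BanachOpClass 𝕜) (τ : OpTopologyAssignment 𝕜)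
    (E : Type u) [NormedAddCommGroup E] [NormedSpace 𝕜 E] [CompleteSpace E] : Prop :=
  I E E ⊆ @closure _ (τ E E) (J E E)

/-- The topology on `E →L[𝕜] F` of uniform convergence on the sets of the family `𝔖`. -/
def uniformOnTop (E F : Type u) [NormedAddCommGroup E] [NormedSpace 𝕜 E] [CompleteSpace E]
    [NormedAddCommGroup F] [NormedSpace 𝕜 F] [CompleteSpace F] (𝔖 : Set (Set E)) :
    TopologicalSpace (E →L[𝕜] F) :=
  TopologicalSpace.induced (fun u => UniformOnFun.ofFun 𝔖 (⇑u))
    (UniformOnFun.topologicalSpace E F 𝔖)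

/-- The operator norm topology on each space of operators. -/
def normTopology (E F : Type u)
    [NormedAddCommGroup E] [NormedSpace 𝕜 E] [CompleteSpace E]
    [NormedAddCommGroup F] [NormedSpace 𝕜 F] [CompleteSpace F] :
    TopologicalSpace (E →L[𝕜] F) := inferInstance

/-- The topology of pointwise convergence (uniform convergence on finite sets; the strong
operator topology). -/
def ptwiseTopology (E F : Type u)
    [NormedAddCommGroup E] [NormedSpace 𝕜 E] [CompleteSpace E]
    [NormedAddCommGroup F] [NormedSpace 𝕜 F] [CompleteSpace F] :
    TopologicalSpace (E →L[𝕜] F) := uniformOnTop 𝕜 E F {s : Set E | s.Finite}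

/-- The compact-open topology: uniform convergence on compact sets. -/
def compactOpenTopology (E F : Type u)
    [NormedAddCommGroup E] [NormedSpace 𝕜 E] [CompleteSpace E]
    [NormedAddCommGroup F] [NormedSpace 𝕜 F] [CompleteSpace F] :
    TopologicalSpace (E →L[𝕜] F) := uniformOnTop 𝕜 E F {K : Set E | IsCompact K}

/-- An assignment of a family of subsets to each Banach space. -/
abbrev SetFamilyAssignment (𝕜 : Type u) [RCLike 𝕜] : Type (u + 1) :=
  ∀ (E : Type u) [NormedAddCommGroup E] [NormedSpace 𝕜 E] [CompleteSpace E], Set (Set E)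

/-- The topology of uniform convergence on the sets of the family `𝒜 E`. -/
def famTopology (𝒜 : SetFamilyAssignment 𝕜) (E F : Type u)
    [NormedAddCommGroup E] [NormedSpace 𝕜 E] [CompleteSpace E]
    [NormedAddCommGroup F] [NormedSpace 𝕜 F] [CompleteSpace F] :
    TopologicalSpace (E →L[𝕜] F) := uniformOnTop 𝕜 E F (𝒜 E)

/-- The class of finite rank bounded operators. -/
def finRankClass (E F : Type u)
    [NormedAddCommGroup E] [NormedSpace 𝕜 E] [CompleteSpace E]
    [NormedAddCommGroup F] [NormedSpace 𝕜 F] [CompleteSpace F] : Set (E →L[𝕜] F) :=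
  {u | IsFiniteRankOp 𝕜 u}

/-- The class of compact operators: those mapping the closed unit ball to a relatively
compact set. -/
def compactClass (E F : Type u)
    [NormedAddCommGroup E] [NormedSpace 𝕜 E] [CompleteSpace E]
    [NormedAddCommGroup F] [NormedSpace 𝕜 F] [CompleteSpace F] : Set (E →L[𝕜] F) :=
  {u | IsCompact (closure (⇑u '' Metric.closedBall 0 1))}

/-- The class of all bounded operators. -/
def boundedClass (E F : Type u)
    [NormedAddCommGroup E] [NormedSpace 𝕜 E] [CompleteSpace E]
    [NormedAddCommGroup F] [NormedSpace 𝕜 F] [CompleteSpace F] : Set (E →L[𝕜] F) :=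
  Set.univ

/-- A witness that `A` is an `I`-bounded subset of `E`: a Banach space `F` and an operator
`u ∈ I(F;E)` with `A ⊆ u(B_F)`. -/
structure IBddWitness (C : BanachOpClass 𝕜) (E : Type u) [NormedAddCommGroup E]
    [NormedSpace 𝕜 E] [CompleteSpace E] (A : Set E) : Type (u + 1) where
  F : Type u
  [iG : NormedAddCommGroup F]
  [iS : NormedSpace 𝕜 F]
  [iC : CompleteSpace F]
  u : F →L[𝕜] E
  hu : u ∈ C F E
  hA : A ⊆ ⇑u '' Metric.closedBall 0 1

/-- `C_I(E)`: the `I`-bounded subsets of `E`. -/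
def IBddSets (C : BanachOpClass 𝕜) (E : Type u) [NormedAddCommGroup E]
    [NormedSpace 𝕜 E] [CompleteSpace E] : Set (Set E) :=
  {A | Nonempty (IBddWitness 𝕜 C E A)}

/-- The topology `τ_{C_I}` of uniform convergence on `I`-bounded sets. -/
def iBddTopology (C : BanachOpClass 𝕜) (E F : Type u)
    [NormedAddCommGroup E] [NormedSpace 𝕜 E] [CompleteSpace E]
    [NormedAddCommGroup F] [NormedSpace 𝕜 F] [CompleteSpace F] :
    TopologicalSpace (E →L[𝕜] F) := uniformOnTop 𝕜 E F (IBddSets 𝕜 C E)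

/-- `L_I`: the class of `I`-bounded operators, i.e. those mapping the closed unit ball
to an `I`-bounded set. -/
def LBddClass (C : BanachOpClass 𝕜) (E F : Type u)
    [NormedAddCommGroup E] [NormedSpace 𝕜 E] [CompleteSpace E]
    [NormedAddCommGroup F] [NormedSpace 𝕜 F] [CompleteSpace F] : Set (E →L[𝕜] F) :=
  {T | ⇑T '' Metric.closedBall 0 1 ∈ IBddSets 𝕜 C F}

/-- A witness that `B` is an `I`-compact subset of `E`. -/
structure ICptWitness (C : BanachOpClass 𝕜) (E : Type u) [NormedAddCommGroup E]
    [NormedSpace 𝕜 E] [CompleteSpace E] (B : Set E) : Type (u + 1) where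
  F : Type u
  [iG : NormedAddCommGroup F]
  [iS : NormedSpace 𝕜 F]
  [iC : CompleteSpace F]
  K : Set F
  hK : IsCompact K
  u : F →L[𝕜] E
  hu : u ∈ C F E
  A : Set E
  hA : A ⊆ ⇑u '' K
  hB : B = closure A

/-- `K_I(E)`: the `I`-compact subsets of `E`. -/
def ICptSets (C : BanachOpClass 𝕜) (E : Type u) [NormedAddCommGroup E]
    [NormedSpace 𝕜 E] [CompleteSpace E] : Set (Set E) :=
  {B | Nonempty (ICptWitness 𝕜 C E B)}

/-- The topology `τ_{K_I}` of uniform convergence on `I`-compact sets. -/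
def iCptTopology (C : BanachOpClass 𝕜) (E F : Type u)
    [NormedAddCommGroup E] [NormedSpace 𝕜 E] [CompleteSpace E]
    [NormedAddCommGroup F] [NormedSpace 𝕜 F] [CompleteSpace F] :
    TopologicalSpace (E →L[𝕜] F) := uniformOnTop 𝕜 E F (ICptSets 𝕜 C E)

/-- The absolutely convex hull of the terms of a sequence: all finite sums `Σ λᵢ • x_{nᵢ}`
with `Σ ‖λᵢ‖ ≤ 1`. -/
def absConvexHullSeq {E : Type u} [NormedAddCommGroup E] [NormedSpace 𝕜 E]
    (x : ℕ → E) : Set E :=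
  {y | ∃ (m : ℕ) (lam : Fin m → 𝕜) (idx : Fin m → ℕ),
    (∑ i, ‖lam i‖) ≤ 1 ∧ y = ∑ i, lam i • x (idx i)}

/-- `BR_q(E)`: the Bourgain–Reinov `q`-compact subsets of `E`. -/
def BRSets (q : ℝ) (E : Type u) [NormedAddCommGroup E] [NormedSpace 𝕜 E]
    [CompleteSpace E] : Set (Set E) :=
  {A | ∃ x : ℕ → E, Summable (fun n => ‖x n‖ ^ q) ∧ A ⊆ closure (absConvexHullSeq 𝕜 x)}

/-- The topology `τ_{BR_q}` of uniform convergence on Bourgain–Reinov `q`-compact sets. -/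
def brTopology (q : ℝ) (E F : Type u)
    [NormedAddCommGroup E] [NormedSpace 𝕜 E] [CompleteSpace E]
    [NormedAddCommGroup F] [NormedSpace 𝕜 F] [CompleteSpace F] :
    TopologicalSpace (E →L[𝕜] F) := uniformOnTop 𝕜 E F (BRSets 𝕜 q E)

/-- The Grothendieck property of an operator ideal. -/
def GrothendieckProperty (C : BanachOpClass 𝕜) : Prop :=
  ∀ (E : Type u) [NormedAddCommGroup E] [NormedSpace 𝕜 E] [CompleteSpace E] (A : Set E),
    Bornology.IsBounded A →
    (∀ ε : ℝ, 0 < ε → ∃ Aε ∈ IBddSets 𝕜 C E, A ⊆ Aε + Metric.closedBall (0 : E) ε) →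
    A ∈ IBddSets 𝕜 C E

/-- A witness that `T` factors as `T = R ∘ S` with `S` in the class `D` and `R` in the
class `C`, through some Banach space `Z`. -/
structure FactorWitness (D C : BanachOpClass 𝕜) (F E : Type u)
    [NormedAddCommGroup F] [NormedSpace 𝕜 F] [CompleteSpace F]
    [NormedAddCommGroup E] [NormedSpace 𝕜 E] [CompleteSpace E]
    (T : F →L[𝕜] E) : Type (u + 1) where
  Z : Type u
  [iG : NormedAddCommGroup Z]
  [iS : NormedSpace 𝕜 Z]
  [iC : CompleteSpace Z]
  S : F →L[𝕜] Z
  R : Z →L[𝕜] E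
  hS : S ∈ D F Z
  hR : R ∈ C Z E
  heq : T = R.comp S

/-! An `I`-compact set `closure A` with `A ⊆ u(K)` lies in the compact set `u(K)`, so it is
compact; hence a bounded operator `v` maps it onto `closure (v(A))`, and `v(A) ⊆ (v ∘ u)(K)`
with `v ∘ u ∈ I`. Singletons are images of
`{1} ⊆ 𝕜` under the rank-one operator `λ ↦ λ x`.

For any family of sets stable under images by bounded operators, the maps `v ↦ w ∘ v ∘ u`,
`v ↦ a • v` and `(v₁, v₂) ↦ v₁ + v₂` are continuous for the topology of uniform convergence on
the family, and continuous maps send closures into closures; hence the closure of an operator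
ideal is again an operator ideal. -/

variable {𝕜}

section UniformOnTop

variable {E F G H : Type u}
  [NormedAddCommGroup E] [NormedSpace 𝕜 E] [CompleteSpace E]
  [NormedAddCommGroup F] [NormedSpace 𝕜 F] [CompleteSpace F]
  [NormedAddCommGroup G] [NormedSpace 𝕜 G] [CompleteSpace G]
  [NormedAddCommGroup H] [NormedSpace 𝕜 H] [CompleteSpace H]

lemma continuous_add_uniformOnTop (𝔖 : Set (Set E)) :
    Continuous[instTopologicalSpaceProd (t₁ := uniformOnTop 𝕜 E F 𝔖)
        (t₂ := uniformOnTop 𝕜 E F 𝔖), uniformOnTop 𝕜 E F 𝔖]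
      (fun p : (E →L[𝕜] F) × (E →L[𝕜] F) => p.1 + p.2) := by
  let := uniformOnTop 𝕜 E F 𝔖
  have hcoe : Continuous fun v : E →L[𝕜] F => UniformOnFun.ofFun 𝔖 ⇑v := continuous_induced_dom
  exact continuous_induced_rng.2 ((hcoe.comp continuous_fst).add (hcoe.comp continuous_snd))

lemma continuous_const_smul_uniformOnTop (𝔖 : Set (Set E)) (a : 𝕜) :
    Continuous[uniformOnTop 𝕜 E F 𝔖, uniformOnTop 𝕜 E F 𝔖] (fun v : E →L[𝕜] F => a • v) := by
  let := uniformOnTop 𝕜 E F 𝔖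
  exact continuous_induced_rng.2 ((continuous_const_smul a).comp continuous_induced_dom)

lemma continuous_comp_comp_uniformOnTop {𝔖 : Set (Set F)} {𝔗 : Set (Set E)}
    (u : E →L[𝕜] F) (w : G →L[𝕜] H) (hu : MapsTo (⇑u '' ·) 𝔗 𝔖) :
    Continuous[uniformOnTop 𝕜 F G 𝔖, uniformOnTop 𝕜 E H 𝔗]
      (fun v : F →L[𝕜] G => w.comp (v.comp u)) := by
  let := uniformOnTop 𝕜 F G 𝔖
  have hpost := UniformOnFun.postcomp_uniformContinuous (𝔖 := 𝔖) w.uniformContinuous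
  have hpre := UniformOnFun.precomp_uniformContinuous (β := H) hu
  exact continuous_induced_rng.2
    ((hpre.continuous.comp hpost.continuous).comp continuous_induced_dom)

end UniformOnTop

theorem IsOperatorIdeal.closureClass_famTopology {𝒜 : SetFamilyAssignment 𝕜}
    (h𝒜 : ∀ (E F : Type u) [NormedAddCommGroup E] [NormedSpace 𝕜 E] [CompleteSpace E]
      [NormedAddCommGroup F] [NormedSpace 𝕜 F] [CompleteSpace F] (u : E →L[𝕜] F),
      MapsTo (⇑u '' ·) (𝒜 E) (𝒜 F))
    {J : BanachOpClass 𝕜} (hJ : IsOperatorIdeal 𝕜 J) :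
    IsOperatorIdeal 𝕜 (closureClass 𝕜 (famTopology 𝕜 𝒜) J) where
  smul_mem E F _ _ _ _ _ _ a v hv := by
    let := famTopology 𝕜 𝒜 E F
    exact map_mem_closure (continuous_const_smul_uniformOnTop _ a) hv (hJ.smul_mem E F a)
  add_mem E F _ _ _ _ _ _ v₁ v₂ hv₁ hv₂ := by
    let := famTopology 𝕜 𝒜 E F
    exact map_mem_closure₂ (continuous_add_uniformOnTop _) hv₁ hv₂
      fun a ha b hb => hJ.add_mem E F a b ha hb
  finiteRank_mem E F _ _ _ _ _ _ v hv := by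
    let := famTopology 𝕜 𝒜 E F
    exact subset_closure (hJ.finiteRank_mem E F v hv)
  comp_mem E F G H _ _ _ _ _ _ _ _ _ _ _ _ u v w hv := by
    let := famTopology 𝕜 𝒜 F G
    let := famTopology 𝕜 𝒜 E H
    exact map_mem_closure (f := fun v' : F →L[𝕜] G => w.comp (v'.comp u))
      (continuous_comp_comp_uniformOnTop u w (h𝒜 E F u)) hv fun v' => hJ.comp_mem E F G H u v' w

section ICptSets

variable {I : BanachOpClass 𝕜} {E F : Type u}
  [NormedAddCommGroup E] [NormedSpace 𝕜 E] [CompleteSpace E]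
  [NormedAddCommGroup F] [NormedSpace 𝕜 F] [CompleteSpace F]

lemma isCompact_of_mem_ICptSets {B : Set E} (hB : B ∈ ICptSets 𝕜 I E) : IsCompact B := by
  obtain ⟨⟨G, K, hK, v, -, A, hA, rfl⟩⟩ := hB
  exact (hK.image v.continuous).closure_of_subset hA

lemma singleton_mem_ICptSets (hI : IsOperatorIdeal 𝕜 I) (x : E) : {x} ∈ ICptSets 𝕜 I E :=
  ⟨⟨𝕜, {1}, isCompact_singleton, ContinuousLinearMap.toSpanSingleton 𝕜 x,
    hI.finiteRank_mem _ _ _ (LinearMap.finiteDimensional_range _), {x}, by simp,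
    closure_singleton.symm⟩⟩

lemma image_mem_ICptSets (hI : IsOperatorIdeal 𝕜 I) {B : Set E} (hB : B ∈ ICptSets 𝕜 I E)
    (u : E →L[𝕜] F) : ⇑u '' B ∈ ICptSets 𝕜 I F := by
  have hBc := isCompact_of_mem_ICptSets hB
  obtain ⟨⟨G, K, hK, v, hv, A, hA, rfl⟩⟩ := hB
  refine ⟨⟨G, K, hK, u.comp v, ?_, u '' A, ?_, ?_⟩⟩
  · simpa using hI.comp_mem G G E F (.id 𝕜 G) v u hv
  · rw [ContinuousLinearMap.coe_comp, image_comp]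
    exact image_mono hA
  · exact image_closure_of_isCompact hBc u.continuous.continuousOn

end ICptSets

/-- I-compact sets are norm compact (in particular bounded), contain the
singletons, and are stable under images of bounded operators; consequently τ_K_I is an
ideal topology. -/
theorem statement13 (I : BanachOpClass 𝕜) (hI : IsOperatorIdeal 𝕜 I) :
    (∀ (E : Type u) [NormedAddCommGroup E] [NormedSpace 𝕜 E] [CompleteSpace E], ∀ B ∈ ICptSets 𝕜 I E, IsCompact B ∧ Bornology.IsBounded B) ∧
    (∀ (E : Type u) [NormedAddCommGroup E] [NormedSpace 𝕜 E] [CompleteSpace E] (x : E), {x} ∈ ICptSets 𝕜 I E) ∧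
    (∀ (E F : Type u) [NormedAddCommGroup E] [NormedSpace 𝕜 E] [CompleteSpace E] [NormedAddCommGroup F] [NormedSpace 𝕜 F] [CompleteSpace F], ∀ B ∈ ICptSets 𝕜 I E,
      ∀ u : E →L[𝕜] F, ⇑u '' B ∈ ICptSets 𝕜 I F) ∧
    (∀ J : BanachOpClass 𝕜, IsOperatorIdeal 𝕜 J →
      IsOperatorIdeal 𝕜 (closureClass 𝕜 (iCptTopology 𝕜 I) J)) :=
  ⟨fun _ _ _ _ _ hB => ⟨isCompact_of_mem_ICptSets hB, (isCompact_of_mem_ICptSets hB).isBounded⟩,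
    fun _ _ _ _ => singleton_mem_ICptSets hI,
    fun _ _ _ _ _ _ _ _ _ hB => image_mem_ICptSets hI hB,
    fun _ hJ => hJ.closureClass_famTopology fun _ _ _ _ _ _ _ _ u _ hB =>
      image_mem_ICptSets hI hB u⟩
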